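/- arXiv:1612.04189 — 3 statements merged into one kernel-verified Lean document; each statement's English description precedes it below -/
import Mathlib

section
/- Let M be a modular lattice with no doubly reducible element, where c ∈ M is doubly reducible if there exist a₀, a₁ < c and b₀, b₁ > c with c = a₀ ∨ a₁ = b₀ ∧ b₁. Then the ideal lattice Id M also has no doubly reducible element; equivalently, there are no incomparable pairs of ideals (𝐚₀, 𝐚₁) and (𝐛₀, 𝐛₁) of M with 𝐚₀ ∨ 𝐚₁ = 𝐛₀ ∩ 𝐛₁. -/
/-- `I` is an ideal of the lattice `M`: nonempty, downward closed, and closed under joins. -/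
def IsLatticeIdeal {M : Type*} [Lattice M] (I : Set M) : Prop :=
  I.Nonempty ∧ (∀ a b : M, a ≤ b → b ∈ I → a ∈ I) ∧ (∀ a b : M, a ∈ I → b ∈ I → a ⊔ b ∈ I)

/-- The join of two ideals of a lattice, as sets. -/
def idealJoin {M : Type*} [Lattice M] (A B : Set M) : Set M :=
  {x | ∃ a ∈ A, ∃ b ∈ B, x ≤ a ⊔ b}

/-- `c` is doubly reducible: `c = a₀ ⊔ a₁ = b₀ ⊓ b₁` with `a₀, a₁ < c < b₀, b₁`. -/
def DoublyReducible {M : Type*} [Lattice M] (c : M) : Prop :=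
  ∃ a₀ a₁ b₀ b₁ : M, a₀ < c ∧ a₁ < c ∧ c < b₀ ∧ c < b₁ ∧
    c = a₀ ⊔ a₁ ∧ c = b₀ ⊓ b₁

/-- If a modular lattice `M` has no doubly reducible element, then neither does
its ideal lattice `Id M`: there are no incomparable pairs of ideals
`(𝐚₀, 𝐚₁)`, `(𝐛₀, 𝐛₁)` of `M` with `𝐚₀ ∨ 𝐚₁ = 𝐛₀ ∩ 𝐛₁`. -/
theorem ideal_lattice_no_doubly_reducible
    {M : Type*} [Lattice M] [IsModularLattice M]
    (hM : ∀ c : M, ¬ DoublyReducible c) :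
    ¬ ∃ A₀ A₁ B₀ B₁ : Set M,
        IsLatticeIdeal A₀ ∧ IsLatticeIdeal A₁ ∧ IsLatticeIdeal B₀ ∧ IsLatticeIdeal B₁ ∧
        ¬ A₀ ⊆ A₁ ∧ ¬ A₁ ⊆ A₀ ∧ ¬ B₀ ⊆ B₁ ∧ ¬ B₁ ⊆ B₀ ∧
        idealJoin A₀ A₁ = B₀ ∩ B₁ := by
  rintro ⟨A₀, A₁, B₀, B₁, hA₀, hA₁, hB₀, hB₁, h01, h10, hB01, hB10, hEq⟩
  obtain ⟨x₀, hx₀A, hx₀nA⟩ := Set.not_subset.1 h01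
  obtain ⟨x₁, hx₁A, hx₁nA⟩ := Set.not_subset.1 h10
  obtain ⟨y₀, hy₀B, hy₀nB⟩ := Set.not_subset.1 hB01
  obtain ⟨y₁, hy₁B, hy₁nB⟩ := Set.not_subset.1 hB10
  -- `y₀ ⊓ y₁` belongs to both `B₀` and `B₁`, hence to the ideal join of `A₀` and `A₁`
  have hp : y₀ ⊓ y₁ ∈ idealJoin A₀ A₁ := by
    rw [hEq]
    exact ⟨hB₀.2.1 _ _ inf_le_left hy₀B, hB₁.2.1 _ _ inf_le_right hy₁B⟩
  obtain ⟨u₀, hu₀, u₁, hu₁, hple⟩ := hp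
  have hv₀ : u₀ ⊔ x₀ ∈ A₀ := hA₀.2.2 _ _ hu₀ hx₀A
  have hv₁ : u₁ ⊔ x₁ ∈ A₁ := hA₁.2.2 _ _ hu₁ hx₁A
  set c : M := (u₀ ⊔ x₀) ⊔ (u₁ ⊔ x₁) with hc
  have hcB : c ∈ B₀ ∩ B₁ := by
    rw [← hEq]; exact ⟨_, hv₀, _, hv₁, le_rfl⟩
  have hpc : y₀ ⊓ y₁ ≤ c := hple.trans (sup_le_sup le_sup_left le_sup_left)
  -- Key consequence of `hM`: any proper join lying in `B₀ ∩ B₁` is strictly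
  -- below `(z ⊔ y₀) ⊓ (z ⊔ y₁)`.
  have key : ∀ z a₀ a₁ : M, a₀ < z → a₁ < z → z = a₀ ⊔ a₁ → z ∈ B₀ → z ∈ B₁ →
      z < (z ⊔ y₀) ⊓ (z ⊔ y₁) := by
    intro z a₀ a₁ h0 h1 hz hzB0 hzB1
    have hb0 : z < z ⊔ y₀ := by
      rcases (le_sup_left : z ≤ z ⊔ y₀).lt_or_eq with h | h
      · exact h
      · exact absurd (hB₁.2.1 y₀ z (le_sup_right.trans h.ge) hzB1) hy₀nB
    have hb1 : z < z ⊔ y₁ := by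
      rcases (le_sup_left : z ≤ z ⊔ y₁).lt_or_eq with h | h
      · exact h
      · exact absurd (hB₀.2.1 y₁ z (le_sup_right.trans h.ge) hzB0) hy₁nB
    have hne : z ≠ (z ⊔ y₀) ⊓ (z ⊔ y₁) := by
      intro he
      exact hM z ⟨a₀, a₁, z ⊔ y₀, z ⊔ y₁, h0, h1, hb0, hb1, hz, he⟩
    exact (le_inf le_sup_left le_sup_left).lt_of_ne hne
  -- `c` is a proper join
  have hv₀lt : u₀ ⊔ x₀ < c := by
    rcases (le_sup_left : u₀ ⊔ x₀ ≤ c).lt_or_eq with h | h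
    · exact h
    · have hx : x₁ ∈ A₀ :=
        hA₀.2.1 x₁ (u₀ ⊔ x₀) ((le_sup_right.trans le_sup_right).trans h.ge) hv₀
      exact absurd hx hx₁nA
  have hv₁lt : u₁ ⊔ x₁ < c := by
    rcases (le_sup_right : u₁ ⊔ x₁ ≤ c).lt_or_eq with h | h
    · exact h
    · have hx : x₀ ∈ A₁ :=
        hA₁.2.1 x₀ (u₁ ⊔ x₁) ((le_sup_right.trans le_sup_left).trans h.ge) hv₁
      exact absurd hx hx₀nA
  have h1 : c < (c ⊔ y₀) ⊓ (c ⊔ y₁) := key c _ _ hv₀lt hv₁lt rfl hcB.1 hcB.2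
  set d₀ : M := y₀ ⊓ (c ⊔ y₁) with hd₀
  set d₁ : M := y₁ ⊓ (c ⊔ y₀) with hd₁
  have m0 : (c ⊔ y₀) ⊓ (c ⊔ y₁) = c ⊔ d₀ := sup_inf_assoc_of_le _ le_sup_left
  have m1 : (c ⊔ y₀) ⊓ (c ⊔ y₁) = c ⊔ d₁ := by
    rw [inf_comm]; exact sup_inf_assoc_of_le _ le_sup_left
  have h1' : c < c ⊔ d₀ := m0 ▸ h1
  have hd₀lt : d₀ < c ⊔ d₀ := by
    rcases (le_sup_right : d₀ ≤ c ⊔ d₀).lt_or_eq with h | h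
    · exact h
    · exfalso
      have hcy : c ⊔ d₀ ≤ y₀ := h.ge.trans inf_le_left
      have heq : c ⊔ d₁ = c ⊔ d₀ := m1.symm.trans m0
      have hd1le : d₁ ≤ c := by
        have h1y : d₁ ≤ y₀ := (le_sup_right.trans heq.le).trans hcy
        exact (le_inf h1y inf_le_left).trans hpc
      have hce : c ⊔ d₀ = c := by
        rw [← heq, sup_eq_left.2 hd1le]
      exact h1'.ne' hce
  -- `c ⊔ d₀` is again a proper join in `B₀ ∩ B₁`
  have hcd₀B0 : c ⊔ d₀ ∈ B₀ :=
    hB₀.2.1 _ _ (m0 ▸ (inf_le_left : (c ⊔ y₀) ⊓ (c ⊔ y₁) ≤ c ⊔ y₀))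
      (hB₀.2.2 _ _ hcB.1 hy₀B)
  have hcd₀B1 : c ⊔ d₀ ∈ B₁ :=
    hB₁.2.1 _ _ (m0 ▸ (inf_le_right : (c ⊔ y₀) ⊓ (c ⊔ y₁) ≤ c ⊔ y₁))
      (hB₁.2.2 _ _ hcB.2 hy₁B)
  have h2 : c ⊔ d₀ < ((c ⊔ d₀) ⊔ y₀) ⊓ ((c ⊔ d₀) ⊔ y₁) :=
    key (c ⊔ d₀) c d₀ h1' hd₀lt rfl hcd₀B0 hcd₀B1
  -- but modularity shows this meet collapses to `c ⊔ d₀`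
  have hcompute : ((c ⊔ d₀) ⊔ y₀) ⊓ ((c ⊔ d₀) ⊔ y₁) = c ⊔ d₀ := by
    have step1 : ((c ⊔ d₀) ⊔ y₀) ⊓ ((c ⊔ d₀) ⊔ y₁) = (c ⊔ d₀) ⊔ (y₀ ⊓ ((c ⊔ d₀) ⊔ y₁)) :=
      sup_inf_assoc_of_le _ le_sup_left
    have step2 : y₀ ⊓ ((c ⊔ d₀) ⊔ y₁) = d₀ := by
      have hre : (c ⊔ d₀) ⊔ y₁ = d₀ ⊔ (c ⊔ y₁) := by
        rw [sup_comm c d₀, sup_assoc]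
      rw [hre, inf_comm, sup_inf_assoc_of_le _ (inf_le_left : d₀ ≤ y₀)]
      rw [inf_comm (c ⊔ y₁) y₀, ← hd₀, sup_idem]
    rw [step1, step2, sup_assoc, sup_idem]
  rw [hcompute] at h2
  exact lt_irrefl _ h2
end

section
/- Let M be a modular lattice with no element c admitting a₀, a₁ < c and b₀, b₁ > c with c = a₀∨a₁ = b₀∧b₁. Then there are no ideals 𝐚₀, 𝐚₁, 𝐛₀, 𝐛₁ of M with 𝐚₀ ∨ 𝐚₁ = 𝐛₀ ∩ 𝐛₁, each 𝐚ᵢ ⊄ 𝐚₁₋ᵢ and each 𝐛ᵢ ⊄ 𝐛₁₋ᵢ. -/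
/-- Key criterion: in a modular lattice with no doubly reducible element, for
`p ∈ A₀`, `q ∈ A₁`, `y₀ ∈ B₀`, `y₁ ∉ B₀` (with strictness witnesses `a₀, a₁`
below everything), we must have `(p ⊓ (y₀ ⊓ y₁) ⊔ q) ⊓ y₀ ≤ y₁`.  Otherwise
`c = (p ⊓ m) ⊔ (q ⊓ m)` (where `m = y₀ ⊓ y₁`) is doubly reducible, since by
modularity `c = ((p ⊓ m ⊔ q) ⊓ y₀) ⊓ y₁`. -/
private lemma crit {M : Type*} [Lattice M] [IsModularLattice M]
    (hM : ∀ c : M, ¬ DoublyReducible c)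
    (A₀ A₁ B₀ : Set M)
    (hA₀d : ∀ a b : M, a ≤ b → b ∈ A₀ → a ∈ A₀)
    (hA₁d : ∀ a b : M, a ≤ b → b ∈ A₁ → a ∈ A₁)
    (hB₀d : ∀ a b : M, a ≤ b → b ∈ B₀ → a ∈ B₀)
    {a₀ a₁ p q y₀ y₁ : M}
    (hp : p ∈ A₀) (hq : q ∈ A₁) (ha₀ : a₀ ∉ A₁) (ha₁ : a₁ ∉ A₀)
    (ha₀p : a₀ ≤ p) (ha₁q : a₁ ≤ q)
    (ha₀m : a₀ ≤ y₀ ⊓ y₁) (ha₁m : a₁ ≤ y₀ ⊓ y₁)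
    (hy₀ : y₀ ∈ B₀) (hy₁ : y₁ ∉ B₀) :
    (p ⊓ (y₀ ⊓ y₁) ⊔ q) ⊓ y₀ ≤ y₁ := by
  by_contra hbad
  set m := y₀ ⊓ y₁ with hm
  set x₀ := p ⊓ m with hx₀
  set x₁ := q ⊓ m with hx₁
  set c := x₀ ⊔ x₁ with hc
  set z := (x₀ ⊔ q) ⊓ y₀ with hz
  have hmod : x₀ ⊔ q ⊓ m = (x₀ ⊔ q) ⊓ m := (sup_inf_assoc_of_le q (inf_le_right : p ⊓ m ≤ m)).symm
  have hkey : c = z ⊓ y₁ := by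
    have h1 : z ⊓ y₁ = (x₀ ⊔ q) ⊓ m := by rw [hz, hm, inf_assoc]
    rw [h1, ← hmod]
  have hcy₀ : c ≤ y₀ := (sup_le inf_le_right inf_le_right).trans inf_le_left
  refine hM c ⟨x₀, x₁, z, y₁, ?_, ?_, ?_, ?_, rfl, hkey⟩
  · refine lt_of_le_of_ne le_sup_left fun h => ha₁ (hA₀d a₁ p ?_ hp)
    calc a₁ ≤ x₁ := le_inf ha₁q ha₁m
    _ ≤ c := le_sup_right
    _ = x₀ := h.symm
    _ ≤ p := inf_le_left
  · refine lt_of_le_of_ne le_sup_right fun h => ha₀ (hA₁d a₀ q ?_ hq)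
    calc a₀ ≤ x₀ := le_inf ha₀p ha₀m
    _ ≤ c := le_sup_left
    _ = x₁ := h.symm
    _ ≤ q := inf_le_left
  · refine lt_of_le_of_ne (hkey ▸ inf_le_left) fun h => hbad ?_
    calc z = c := h.symm
    _ = z ⊓ y₁ := hkey
    _ ≤ y₁ := inf_le_right
  · refine lt_of_le_of_ne (hkey ▸ inf_le_right) fun h => hy₁ ?_
    rw [← h]
    exact hB₀d c y₀ hcy₀ hy₀

/-- From the criterion applied to `y₀ := W ⊔ r`, any `r ∈ A₁ ∩ B₀` lies below
any `y₁ ∉ B₀` (given suitable witnesses). -/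
private lemma push {M : Type*} [Lattice M] [IsModularLattice M]
    (hM : ∀ c : M, ¬ DoublyReducible c)
    (A₀ A₁ B₀ : Set M)
    (hA₀d : ∀ a b : M, a ≤ b → b ∈ A₀ → a ∈ A₀)
    (hA₁d : ∀ a b : M, a ≤ b → b ∈ A₁ → a ∈ A₁)
    (hA₁j : ∀ a b : M, a ∈ A₁ → b ∈ A₁ → a ⊔ b ∈ A₁)
    (hB₀d : ∀ a b : M, a ≤ b → b ∈ B₀ → a ∈ B₀)
    (hB₀j : ∀ a b : M, a ∈ B₀ → b ∈ B₀ → a ⊔ b ∈ B₀)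
    {a₀ a₁ r W y₁ : M}
    (ha₀A : a₀ ∈ A₀) (ha₀ : a₀ ∉ A₁) (ha₁A : a₁ ∈ A₁) (ha₁ : a₁ ∉ A₀)
    (hr : r ∈ A₁) (hrB : r ∈ B₀)
    (hW : W ∈ B₀) (hy₁ : y₁ ∉ B₀)
    (ha₀W : a₀ ≤ W) (ha₀y : a₀ ≤ y₁) (ha₁W : a₁ ≤ W) (ha₁y : a₁ ≤ y₁) :
    r ≤ y₁ := by
  have h := crit hM A₀ A₁ B₀ hA₀d hA₁d hB₀d (p := a₀) (q := r ⊔ a₁)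
      (y₀ := W ⊔ r) (y₁ := y₁) ha₀A (hA₁j r a₁ hr ha₁A) ha₀ ha₁
      le_rfl le_sup_right
      (le_inf (ha₀W.trans le_sup_left) ha₀y)
      (le_inf (ha₁W.trans le_sup_left) ha₁y)
      (hB₀j W r hW hrB) hy₁
  calc r ≤ (a₀ ⊓ ((W ⊔ r) ⊓ y₁) ⊔ (r ⊔ a₁)) ⊓ (W ⊔ r) :=
        le_inf ((le_sup_left : r ≤ r ⊔ a₁).trans le_sup_right) le_sup_right
  _ ≤ y₁ := h

/-- In a modular lattice `M` with no doubly reducible element, the existence of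
ideals `𝐚₀, 𝐚₁, 𝐛₀, 𝐛₁` with each `𝐚ᵢ ⊄ 𝐚₁₋ᵢ`, each `𝐛ᵢ ⊄ 𝐛₁₋ᵢ`, and
`𝐚₀ ∨ 𝐚₁ = 𝐛₀ ∩ 𝐛₁`, yields a contradiction. -/
theorem no_incomparable_ideal_square_in_modular_without_doubly_reducible
    {M : Type*} [Lattice M] [IsModularLattice M]
    (hM : ∀ c : M, ¬ DoublyReducible c)
    (A₀ A₁ B₀ B₁ : Set M)
    (hA₀ : IsLatticeIdeal A₀) (hA₁ : IsLatticeIdeal A₁)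
    (hB₀ : IsLatticeIdeal B₀) (hB₁ : IsLatticeIdeal B₁)
    (hA01 : ¬ A₀ ⊆ A₁) (hA10 : ¬ A₁ ⊆ A₀)
    (hB01 : ¬ B₀ ⊆ B₁) (hB10 : ¬ B₁ ⊆ B₀)
    (hEq : idealJoin A₀ A₁ = B₀ ∩ B₁) :
    False := by
  obtain ⟨a₀, ha₀A, ha₀n⟩ := Set.not_subset.mp hA01
  obtain ⟨a₁, ha₁A, ha₁n⟩ := Set.not_subset.mp hA10
  obtain ⟨b₀, hb₀B, hb₀n⟩ := Set.not_subset.mp hB01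
  obtain ⟨b₁, hb₁B, hb₁n⟩ := Set.not_subset.mp hB10
  -- every element of A₀ or A₁ lies in B₀ ∩ B₁
  have hA₀sub : ∀ x ∈ A₀, x ∈ B₀ ∩ B₁ := fun x hx =>
    hEq ▸ (⟨x, hx, a₁, ha₁A, le_sup_left⟩ : x ∈ idealJoin A₀ A₁)
  have hA₁sub : ∀ x ∈ A₁, x ∈ B₀ ∩ B₁ := fun x hx =>
    hEq ▸ (⟨a₀, ha₀A, x, hx, le_sup_right⟩ : x ∈ idealJoin A₀ A₁)
  set u := a₀ ⊔ a₁ with hu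
  have huB₀ : u ∈ B₀ := hB₀.2.2 _ _ (hA₀sub a₀ ha₀A).1 (hA₁sub a₁ ha₁A).1
  have huB₁ : u ∈ B₁ := hB₁.2.2 _ _ (hA₀sub a₀ ha₀A).2 (hA₁sub a₁ ha₁A).2
  set Y₀ := b₀ ⊔ u with hY₀
  set Y₁ := b₁ ⊔ u with hY₁
  have hY₀B : Y₀ ∈ B₀ := hB₀.2.2 _ _ hb₀B huB₀
  have hY₁B : Y₁ ∈ B₁ := hB₁.2.2 _ _ hb₁B huB₁
  have hY₀n : Y₀ ∉ B₁ := fun h => hb₀n (hB₁.2.1 b₀ Y₀ le_sup_left h)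
  have hY₁n : Y₁ ∉ B₀ := fun h => hb₁n (hB₀.2.1 b₁ Y₁ le_sup_left h)
  have ha₀Y₀ : a₀ ≤ Y₀ := (le_sup_left : a₀ ≤ u).trans le_sup_right
  have ha₀Y₁ : a₀ ≤ Y₁ := (le_sup_left : a₀ ≤ u).trans le_sup_right
  have ha₁Y₀ : a₁ ≤ Y₀ := (le_sup_right : a₁ ≤ u).trans le_sup_right
  have ha₁Y₁ : a₁ ≤ Y₁ := (le_sup_right : a₁ ≤ u).trans le_sup_right
  -- decompose Y₀ ⊓ Y₁ through the ideal join
  have hmJ : Y₀ ⊓ Y₁ ∈ idealJoin A₀ A₁ := by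
    rw [hEq]
    exact ⟨hB₀.2.1 _ Y₀ inf_le_left hY₀B, hB₁.2.1 _ Y₁ inf_le_right hY₁B⟩
  obtain ⟨p₁, hp₁, q₁, hq₁, hle⟩ := hmJ
  set p := p₁ ⊔ a₀ with hp
  set q := q₁ ⊔ a₁ with hqdef
  have hpA : p ∈ A₀ := hA₀.2.2 _ _ hp₁ ha₀A
  have hqA : q ∈ A₁ := hA₁.2.2 _ _ hq₁ ha₁A
  have hpB₀ : p ∈ B₀ := (hA₀sub p hpA).1
  have hpB₁ : p ∈ B₁ := (hA₀sub p hpA).2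
  have hqB₀ : q ∈ B₀ := (hA₁sub q hqA).1
  have hqB₁ : q ∈ B₁ := (hA₁sub q hqA).2
  have h1 : q ≤ Y₁ := push hM A₀ A₁ B₀ hA₀.2.1 hA₁.2.1 hA₁.2.2 hB₀.2.1 hB₀.2.2
    ha₀A ha₀n ha₁A ha₁n hqA hqB₀ hY₀B hY₁n ha₀Y₀ ha₀Y₁ ha₁Y₀ ha₁Y₁
  have h2 : q ≤ Y₀ := push hM A₀ A₁ B₁ hA₀.2.1 hA₁.2.1 hA₁.2.2 hB₁.2.1 hB₁.2.2
    ha₀A ha₀n ha₁A ha₁n hqA hqB₁ hY₁B hY₀n ha₀Y₁ ha₀Y₀ ha₁Y₁ ha₁Y₀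
  have h3 : p ≤ Y₁ := push hM A₁ A₀ B₀ hA₁.2.1 hA₀.2.1 hA₀.2.2 hB₀.2.1 hB₀.2.2
    ha₁A ha₁n ha₀A ha₀n hpA hpB₀ hY₀B hY₁n ha₁Y₀ ha₁Y₁ ha₀Y₀ ha₀Y₁
  have h4 : p ≤ Y₀ := push hM A₁ A₀ B₁ hA₁.2.1 hA₀.2.1 hA₀.2.2 hB₁.2.1 hB₁.2.2
    ha₁A ha₁n ha₀A ha₀n hpA hpB₁ hY₁B hY₀n ha₁Y₁ ha₁Y₀ ha₀Y₁ ha₀Y₀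
  set c := Y₀ ⊓ Y₁ with hcdef
  have hcpq : c = p ⊔ q := by
    refine le_antisymm (hle.trans (sup_le_sup le_sup_left le_sup_left)) ?_
    exact sup_le (le_inf h4 h3) (le_inf h2 h1)
  refine hM c ⟨p, q, Y₀, Y₁, ?_, ?_, ?_, ?_, hcpq, rfl⟩
  · refine lt_of_le_of_ne (le_inf h4 h3) fun h => ha₁n (hA₀.2.1 a₁ p ?_ hpA)
    have hqp : q ≤ p := by rw [h, hcpq]; exact le_sup_right
    exact (le_sup_right : a₁ ≤ q).trans hqp
  · refine lt_of_le_of_ne (le_inf h2 h1) fun h => ha₀n (hA₁.2.1 a₀ q ?_ hqA)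
    have hpq : p ≤ q := by rw [h, hcpq]; exact le_sup_left
    exact (le_sup_right : a₀ ≤ p).trans hpq
  · refine lt_of_le_of_ne inf_le_left fun h => hY₀n ?_
    exact hB₁.2.1 Y₀ Y₁ (h ▸ inf_le_right) hY₁B
  · refine lt_of_le_of_ne inf_le_right fun h => hY₁n ?_
    exact hB₀.2.1 Y₁ Y₀ (h ▸ inf_le_left) hY₀B
end

section
/- Every finite distributive lattice D is sharply transferable with respect to the class of relatively complemented modular lattices: for every relatively complemented modular lattice M and every lattice embedding φ : D → Id M, there exists a lattice homomorphism f : D → M with f(x) ∈ φ(x) for all x, and such that f(x) ∈ φ(y) implies x ≤ y for all x, y ∈ D. -/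
/-- A lattice is relatively complemented if every element of every closed
interval has a complement in that interval. -/
def RelativelyComplemented (M : Type*) [Lattice M] : Prop :=
  ∀ a x b : M, a ≤ x → x ≤ b → ∃ y : M, x ⊓ y = a ∧ x ⊔ y = b

/-!
Induct on `t ∈ D`, building a map that behaves as required on the interval `↓t`. If `t` is not
the bottom, write `t = T ⊔ p` with `T ⋖ t` and `p` minimal with `p ≰ T`; then `p` is
join-irreducible and every `x ≤ t` either lies below `T` or equals `(x ⊓ T) ⊔ p`. Given `f` on
`↓T`, pick `m ∈ φ p \ φ p†` with `m ⊓ f T = f (p ⊓ T)` (a relative complement of `u ⊓ f T` in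
`[f (p ⊓ T), u]` for some `u ∈ φ p \ φ p†`) and extend by `x ↦ f (x ⊓ T) ⊔ m` on `↑p`.
Modularity makes the extension preserve meets; `m ∉ φ p†` keeps it sharp.
-/

theorem IsLatticeIdeal.mem_of_le {M : Type*} [Lattice M] {I : Set M} (hI : IsLatticeIdeal I)
    {a b : M} (hab : a ≤ b) (hb : b ∈ I) : a ∈ I :=
  hI.2.1 a b hab hb

theorem IsLatticeIdeal.sup_mem {M : Type*} [Lattice M] {I : Set M} (hI : IsLatticeIdeal I)
    {a b : M} (ha : a ∈ I) (hb : b ∈ I) : a ⊔ b ∈ I :=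
  hI.2.2 a b ha hb

theorem RelativelyComplemented.exists_le_inf_eq_notMem {M : Type*} [Lattice M]
    (hRC : RelativelyComplemented M) {J : Set M} (hJ : IsLatticeIdeal J) {a c u : M}
    (ha : a ∈ J) (hu : u ∉ J) (hca : c ≤ a) (hcu : c ≤ u) :
    ∃ m ≤ u, m ⊓ a = c ∧ m ∉ J := by
  obtain ⟨m, hinf, hsup⟩ := hRC c (u ⊓ a) u (le_inf hcu hca) inf_le_left
  have hmu : m ≤ u := hsup ▸ le_sup_right
  refine ⟨m, hmu, ?_, fun hm => hu ?_⟩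
  · rw [← hinf, inf_comm u a, inf_assoc, inf_eq_right.mpr hmu, inf_comm]
  · exact hsup ▸ hJ.sup_mem (hJ.mem_of_le inf_le_right ha) hm

theorem Minimal.not_le_of_le {D : Type*} [Preorder D] {T p x : D}
    (hp : Minimal (fun y => ¬ y ≤ T) p) (hx : x ≤ T) : ¬ p ≤ x :=
  fun hpx => hp.1 (hpx.trans hx)

theorem CovBy.exists_minimal_not_le_sup_eq {D : Type*} [Lattice D] [Finite D] {T t : D}
    (h : T ⋖ t) :
    ∃ p, Minimal (fun y => ¬ y ≤ T) p ∧ T ⊔ p = t := by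
  obtain ⟨p, hpt, hp⟩ := (Set.toFinite {y : D | ¬ y ≤ T}).exists_le_minimal h.lt.not_ge
  refine ⟨p, hp, ?_⟩
  refine (h.eq_or_eq le_sup_left (sup_le h.le hpt)).resolve_left fun hT => hp.1 ?_
  exact sup_eq_left.mp hT

section Splitting

variable {D : Type*} [DistribLattice D] {T p x : D}

theorem inf_sup_eq_of_le_of_le_sup (hpx : p ≤ x) (hx : x ≤ T ⊔ p) : x ⊓ T ⊔ p = x :=
  le_antisymm (sup_le inf_le_left hpx) <|
    calc x = x ⊓ (T ⊔ p) := (inf_eq_left.mpr hx).symm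
      _ = x ⊓ T ⊔ x ⊓ p := inf_sup_left _ _ _
      _ ≤ x ⊓ T ⊔ p := sup_le_sup_left inf_le_right _

theorem Minimal.le_or_le_of_le_sup (hp : Minimal (fun y => ¬ y ≤ T) p) (hx : x ≤ T ⊔ p) :
    p ≤ x ∨ x ≤ T := by
  by_cases hxp : x ⊓ p ≤ T
  · right
    calc x = x ⊓ (T ⊔ p) := (inf_eq_left.mpr hx).symm
      _ = x ⊓ T ⊔ x ⊓ p := inf_sup_left _ _ _
      _ ≤ T := sup_le inf_le_right hxp
  · exact .inl ((hp.2 hxp inf_le_right).trans inf_le_left)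

theorem Minimal.supPrime (hp : Minimal (fun y => ¬ y ≤ T) p) : SupPrime p := by
  refine ⟨fun hmin => hp.1 ((hmin inf_le_left).trans inf_le_right), fun b c hbc => ?_⟩
  have hle : ∀ {z}, z ≤ p → z ≤ T ⊔ p := fun hz => hz.trans le_sup_right
  rcases hp.le_or_le_of_le_sup (hle (inf_le_left : p ⊓ b ≤ p)) with hb | hb
  · exact .inl (le_inf_iff.mp hb).2
  rcases hp.le_or_le_of_le_sup (hle (inf_le_left : p ⊓ c ≤ p)) with hc | hc
  · exact .inr (le_inf_iff.mp hc).2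
  refine absurd ?_ hp.1
  calc p = p ⊓ (b ⊔ c) := (inf_eq_left.mpr hbc).symm
    _ = p ⊓ b ⊔ p ⊓ c := inf_sup_left _ _ _
    _ ≤ T := sup_le hb hc

end Splitting

theorem SupPrime.exists_isGreatest_not_ge {D : Type*} [Lattice D] [Finite D] {p : D}
    (hp : SupPrime p) : ∃ w, IsGreatest {y | ¬ p ≤ y} w := by
  obtain ⟨b, hbp⟩ := not_isMin_iff.mp hp.not_isMin
  obtain ⟨w, hw⟩ := (Set.toFinite {y : D | ¬ p ≤ y}).exists_maximal ⟨b, hbp.not_ge⟩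
  refine ⟨w, hw.1, fun y hy => ?_⟩
  have hyw : ¬ p ≤ y ⊔ w := fun h => (hp.2 h).elim hy hw.1
  exact le_sup_left.trans (hw.2 hyw le_sup_right)

structure SharpTransferOn {D M : Type*} [Lattice D] [Lattice M] (φ : D → Set M) (t : D)
    (f : D → M) : Prop where
  map_sup : ∀ x ≤ t, ∀ y ≤ t, f (x ⊔ y) = f x ⊔ f y
  map_inf : ∀ x ≤ t, ∀ y ≤ t, f (x ⊓ y) = f x ⊓ f y
  mem : ∀ x ≤ t, f x ∈ φ x
  sharp : ∀ x ≤ t, ∀ y, f x ∈ φ y → x ≤ y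

namespace SharpTransferOn

variable {D M : Type*} [Lattice D] [Lattice M] {φ : D → Set M}

theorem monotoneOn {t : D} {f : D → M} (hf : SharpTransferOn φ t f) :
    MonotoneOn f (Set.Iic t) := fun a ha b hb hab => by
  rw [← inf_eq_left.mpr hab, hf.map_inf a ha b hb]
  exact inf_le_right

theorem exists_of_isMin {t : D} (hφ : (φ t).Nonempty) (ht : IsMin t) :
    ∃ f, SharpTransferOn φ t f := by
  obtain ⟨e, he⟩ := hφ
  have heq : ∀ x ≤ t, x = t := fun x hx => ht.eq_of_le hx
  refine ⟨fun _ => e, fun _ _ _ _ => (sup_idem e).symm, fun _ _ _ _ => (inf_idem e).symm,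
    fun x hx => heq x hx ▸ he, fun x hx y _ => heq x hx ▸ ht.isBot y⟩

theorem exists_inf_eq_mem_of_supPrime [Finite D] (hRC : RelativelyComplemented M)
    (hId : ∀ x : D, IsLatticeIdeal (φ x)) (hemb : ∀ x y : D, x ≤ y ↔ φ x ⊆ φ y) {T p : D}
    {f : D → M} (hf : SharpTransferOn φ T f) (hp : SupPrime p) (hpT : ¬ p ≤ T) :
    ∃ m, m ⊓ f T = f (p ⊓ T) ∧ m ∈ φ p ∧ ∀ y, m ∈ φ y → p ≤ y := by
  obtain ⟨w, hpw, hw⟩ := hp.exists_isGreatest_not_ge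
  have hφw : ∀ y, ¬ p ≤ y → φ y ⊆ φ w := fun y hy => (hemb y w).mp (hw hy)
  obtain ⟨u, hup, huw⟩ := Set.not_subset.mp fun h => hpw ((hemb p w).mpr h)
  have hcp : f (p ⊓ T) ∈ φ p := (hemb _ _).mp inf_le_left (hf.mem _ inf_le_right)
  have hucw : u ⊔ f (p ⊓ T) ∉ φ w := fun h => huw ((hId w).mem_of_le le_sup_left h)
  obtain ⟨m, hmu, hm, hmw⟩ := hRC.exists_le_inf_eq_notMem (hId w) (hφw T hpT (hf.mem T le_rfl))
    hucw (hf.monotoneOn inf_le_right le_rfl inf_le_right) le_sup_right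
  exact ⟨m, hm, (hId p).mem_of_le hmu ((hId p).sup_mem hup hcp),
    fun y hy => by_contra fun hpy => hmw (hφw y hpy hy)⟩

end SharpTransferOn

open Classical in
noncomputable def extendPast {D M : Type*} [Lattice D] [Lattice M] (f : D → M) (T p : D) (m : M)
    (x : D) : M :=
  if p ≤ x then f (x ⊓ T) ⊔ m else f x

section Extension

variable {D M : Type*} [Lattice M] {T p x y : D} {f : D → M} {m : M}

theorem extendPast_of_le [Lattice D] (h : p ≤ x) : extendPast f T p m x = f (x ⊓ T) ⊔ m :=
  if_pos h

theorem extendPast_of_not_le [Lattice D] (h : ¬ p ≤ x) : extendPast f T p m x = f x :=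
  if_neg h

variable [DistribLattice D] {φ : D → Set M} (hf : SharpTransferOn φ T f)
include hf

theorem SharpTransferOn.sup_inf_eq [IsModularLattice M] (hm : m ⊓ f T = f (p ⊓ T)) {a : D}
    (ha : a ≤ T) (hyT : y ≤ T) : (f a ⊔ m) ⊓ f y = f ((a ⊔ p) ⊓ y) :=
  calc (f a ⊔ m) ⊓ f y = (f a ⊔ m) ⊓ f T ⊓ f y := by
        rw [inf_assoc, inf_eq_right.mpr (hf.monotoneOn hyT le_rfl hyT)]
    _ = (f a ⊔ f (p ⊓ T)) ⊓ f y := by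
        rw [sup_inf_assoc_of_le m (hf.monotoneOn ha le_rfl ha), hm]
    _ = f ((a ⊔ p ⊓ T) ⊓ y) := by
        rw [← hf.map_sup a ha _ inf_le_right, ← hf.map_inf _ (sup_le ha inf_le_right) y hyT]
    _ = f ((a ⊔ p) ⊓ y) := by
        rw [sup_inf_left, sup_eq_right.mpr ha, inf_assoc, inf_eq_right.mpr hyT]

variable (hp : Minimal (fun y => ¬ y ≤ T) p)
include hp

theorem extendPast_sup_of_le_of_le (hpx : p ≤ x) (hyT : y ≤ T) :
    extendPast f T p m (x ⊔ y) = extendPast f T p m x ⊔ extendPast f T p m y := by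
  rw [extendPast_of_le (hpx.trans le_sup_left), extendPast_of_le hpx,
    extendPast_of_not_le (hp.not_le_of_le hyT), inf_sup_right, inf_eq_left.mpr hyT,
    hf.map_sup _ inf_le_right _ hyT, sup_right_comm]

theorem extendPast_map_sup (hx : x ≤ T ⊔ p) (hy : y ≤ T ⊔ p) :
    extendPast f T p m (x ⊔ y) = extendPast f T p m x ⊔ extendPast f T p m y := by
  rcases hp.le_or_le_of_le_sup hx with hpx | hxT <;>
    rcases hp.le_or_le_of_le_sup hy with hpy | hyT
  · rw [extendPast_of_le (hpx.trans le_sup_left), extendPast_of_le hpx, extendPast_of_le hpy,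
      inf_sup_right, hf.map_sup _ inf_le_right _ inf_le_right, sup_sup_sup_comm, sup_idem]
  · exact extendPast_sup_of_le_of_le hf hp hpx hyT
  · rw [sup_comm, sup_comm (extendPast f T p m x)]
    exact extendPast_sup_of_le_of_le hf hp hpy hxT
  · rw [extendPast_of_not_le (hp.not_le_of_le (sup_le hxT hyT)),
      extendPast_of_not_le (hp.not_le_of_le hxT), extendPast_of_not_le (hp.not_le_of_le hyT),
      hf.map_sup x hxT y hyT]

theorem extendPast_inf_of_le_of_le [IsModularLattice M] (hm : m ⊓ f T = f (p ⊓ T)) (hpx : p ≤ x)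
    (hx : x ≤ T ⊔ p) (hyT : y ≤ T) :
    extendPast f T p m (x ⊓ y) = extendPast f T p m x ⊓ extendPast f T p m y := by
  rw [extendPast_of_not_le (hp.not_le_of_le (inf_le_right.trans hyT)), extendPast_of_le hpx,
    extendPast_of_not_le (hp.not_le_of_le hyT), hf.sup_inf_eq hm inf_le_right hyT,
    inf_sup_eq_of_le_of_le_sup hpx hx]

theorem extendPast_map_inf [IsModularLattice M] (hm : m ⊓ f T = f (p ⊓ T)) (hx : x ≤ T ⊔ p)
    (hy : y ≤ T ⊔ p) :
    extendPast f T p m (x ⊓ y) = extendPast f T p m x ⊓ extendPast f T p m y := by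
  rcases hp.le_or_le_of_le_sup hx with hpx | hxT <;>
    rcases hp.le_or_le_of_le_sup hy with hpy | hyT
  · rw [extendPast_of_le (le_inf hpx hpy), extendPast_of_le hpx, extendPast_of_le hpy,
      ← inf_sup_assoc_of_le _ le_sup_right, hf.sup_inf_eq hm inf_le_right inf_le_right,
      inf_sup_eq_of_le_of_le_sup hpx hx, inf_assoc]
  · exact extendPast_inf_of_le_of_le hf hp hm hpx hx hyT
  · rw [inf_comm, inf_comm (extendPast f T p m x)]
    exact extendPast_inf_of_le_of_le hf hp hm hpy hy hxT
  · rw [extendPast_of_not_le (hp.not_le_of_le (inf_le_left.trans hxT)),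
      extendPast_of_not_le (hp.not_le_of_le hxT), extendPast_of_not_le (hp.not_le_of_le hyT),
      hf.map_inf x hxT y hyT]

theorem extendPast_mem (hsup : ∀ x y : D, φ (x ⊔ y) = idealJoin (φ x) (φ y)) (hmp : m ∈ φ p)
    (hx : x ≤ T ⊔ p) : extendPast f T p m x ∈ φ x := by
  rcases hp.le_or_le_of_le_sup hx with hpx | hxT
  · have hφx : φ x = idealJoin (φ (x ⊓ T)) (φ p) := by
      rw [← hsup, inf_sup_eq_of_le_of_le_sup hpx hx]
    rw [extendPast_of_le hpx, hφx]
    exact ⟨_, hf.mem _ inf_le_right, m, hmp, le_rfl⟩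
  · rw [extendPast_of_not_le (hp.not_le_of_le hxT)]
    exact hf.mem x hxT

theorem extendPast_sharp (hId : ∀ x : D, IsLatticeIdeal (φ x)) (hmφ : ∀ y, m ∈ φ y → p ≤ y)
    (hx : x ≤ T ⊔ p) (hxy : extendPast f T p m x ∈ φ y) : x ≤ y := by
  rcases hp.le_or_le_of_le_sup hx with hpx | hxT
  · rw [extendPast_of_le hpx] at hxy
    calc x = x ⊓ T ⊔ p := (inf_sup_eq_of_le_of_le_sup hpx hx).symm
      _ ≤ y := sup_le (hf.sharp _ inf_le_right y ((hId y).mem_of_le le_sup_left hxy))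
        (hmφ y ((hId y).mem_of_le le_sup_right hxy))
  · rw [extendPast_of_not_le (hp.not_le_of_le hxT)] at hxy
    exact hf.sharp x hxT y hxy

theorem SharpTransferOn.extendPast [IsModularLattice M] (hm : m ⊓ f T = f (p ⊓ T))
    (hsup : ∀ x y : D, φ (x ⊔ y) = idealJoin (φ x) (φ y)) (hId : ∀ x : D, IsLatticeIdeal (φ x))
    (hmp : m ∈ φ p) (hmφ : ∀ y, m ∈ φ y → p ≤ y) :
    SharpTransferOn φ (T ⊔ p) (extendPast f T p m) where
  map_sup _ hx _ hy := extendPast_map_sup hf hp hx hy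
  map_inf _ hx _ hy := extendPast_map_inf hf hp hm hx hy
  mem _ hx := extendPast_mem hf hp hsup hmp hx
  sharp _ hx _ hxy := extendPast_sharp hf hp hId hmφ hx hxy

end Extension

theorem exists_sharpTransferOn {D M : Type*} [DistribLattice D] [Finite D] [Lattice M]
    [IsModularLattice M] {φ : D → Set M} (hRC : RelativelyComplemented M)
    (hId : ∀ x : D, IsLatticeIdeal (φ x))
    (hsup : ∀ x y : D, φ (x ⊔ y) = idealJoin (φ x) (φ y))
    (hemb : ∀ x y : D, x ≤ y ↔ φ x ⊆ φ y) (t : D) : ∃ f, SharpTransferOn φ t f := by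
  induction t using WellFoundedLT.induction with | _ t ih
  by_cases ht : IsMin t
  · exact SharpTransferOn.exists_of_isMin (hId t).1 ht
  obtain ⟨s, hst⟩ := not_isMin_iff.mp ht
  obtain ⟨T, -, hTt⟩ := exists_le_covBy_of_lt hst
  obtain ⟨p, hp, rfl⟩ := hTt.exists_minimal_not_le_sup_eq
  obtain ⟨f, hf⟩ := ih T hTt.lt
  obtain ⟨m, hm, hmp, hmφ⟩ := hf.exists_inf_eq_mem_of_supPrime hRC hId hemb hp.supPrime hp.1
  exact ⟨_, hf.extendPast hp hm hsup hId hmp hmφ⟩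

theorem finite_distributive_sharply_transferable_relcomp_modular_general
    {D : Type*} [DistribLattice D] [Fintype D]
    {M : Type*} [Lattice M] [IsModularLattice M]
    (hRC : RelativelyComplemented M)
    (φ : D → Set M)
    (hId : ∀ x : D, IsLatticeIdeal (φ x))
    (hsup : ∀ x y : D, φ (x ⊔ y) = idealJoin (φ x) (φ y))
    (hemb : ∀ x y : D, x ≤ y ↔ φ x ⊆ φ y) :
    ∃ f : D → M,
      (∀ x y : D, f (x ⊔ y) = f x ⊔ f y) ∧
      (∀ x y : D, f (x ⊓ y) = f x ⊓ f y) ∧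
      (∀ x : D, f x ∈ φ x) ∧
      (∀ x y : D, f x ∈ φ y → x ≤ y) := by
  cases isEmpty_or_nonempty D
  · exact ⟨isEmptyElim, isEmptyElim, isEmptyElim, isEmptyElim, isEmptyElim⟩
  let _ := Fintype.toOrderTop D
  obtain ⟨f, hf⟩ := exists_sharpTransferOn hRC hId hsup hemb ⊤
  exact ⟨f, fun x y => hf.map_sup x le_top y le_top, fun x y => hf.map_inf x le_top y le_top,
    fun x => hf.mem x le_top, fun x y => hf.sharp x le_top y⟩

/-- Every finite distributive lattice `D` is sharply transferable with respect to
the class of relatively complemented modular lattices: for every such `M` and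
every lattice embedding `φ : D ↪ Id M`, there is a lattice homomorphism
`f : D → M` with `f x ∈ φ x` for all `x`, such that `f x ∈ φ y` implies `x ≤ y`. -/
theorem finite_distributive_sharply_transferable_relcomp_modular
    {D : Type*} [DistribLattice D] [Fintype D]
    {M : Type*} [Lattice M] [IsModularLattice M]
    (hRC : RelativelyComplemented M)
    (φ : D → Set M)
    (hId : ∀ x : D, IsLatticeIdeal (φ x))
    (hinf : ∀ x y : D, φ (x ⊓ y) = φ x ∩ φ y)
    (hsup : ∀ x y : D, φ (x ⊔ y) = idealJoin (φ x) (φ y))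
    (hemb : ∀ x y : D, x ≤ y ↔ φ x ⊆ φ y) :
    ∃ f : D → M,
      (∀ x y : D, f (x ⊔ y) = f x ⊔ f y) ∧
      (∀ x y : D, f (x ⊓ y) = f x ⊓ f y) ∧
      (∀ x : D, f x ∈ φ x) ∧
      (∀ x y : D, f x ∈ φ y → x ≤ y) :=
  finite_distributive_sharply_transferable_relcomp_modular_general hRC φ hId hsup hemb
end
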